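/- Let G be a finite non-cyclic group and H a maximal subgroup of G that is not normal in G. If σ(H) < [G : H] (the index of H in G), then σ(G) ≥ σ(H). -/

import Mathlib

/-- A cover of a group `G`: a finite family of proper subgroups whose union is all of `G`. -/
def IsCover {G : Type*} [Group G] (𝒮 : Finset (Subgroup G)) : Prop :=
  (∀ H ∈ 𝒮, H ≠ ⊤) ∧ ∀ g : G, ∃ H ∈ 𝒮, g ∈ H

/-- `groupSigma G` is the least cardinality of a cover of `G`, and `⊤` if no cover exists
(e.g. if `G` is cyclic). -/
noncomputable def groupSigma (G : Type*) [Group G] : ℕ∞ :=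
  sInf {n : ℕ∞ | ∃ 𝒮 : Finset (Subgroup G), IsCover 𝒮 ∧ (𝒮.card : ℕ∞) = n}

/-! If `σ(G) < σ(H)`, take a cover `𝒮` of `G` of size `σ(G)`. A maximal subgroup `M` of `G`
that is not a member of `𝒮` is contained in no member of `𝒮`, so intersecting `𝒮` with `M`
gives a cover of `M` of size at most `|𝒮|`; hence every conjugate of `H` (which is maximal and
isomorphic to `H`) lies in `𝒮`. Since `H` is maximal and not normal it is self-normalizing, so it
has `[G : H]` conjugates, and `[G : H] ≤ |𝒮| = σ(G) < σ(H) < [G : H]`. -/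

open Pointwise MulAction

section

variable {G : Type*} [Group G]

lemma groupSigma_le_card {𝒮 : Finset (Subgroup G)} (h𝒮 : IsCover 𝒮) :
    groupSigma G ≤ 𝒮.card :=
  sInf_le ⟨𝒮, h𝒮, rfl⟩

lemma exists_isCover_card_eq_groupSigma (h : groupSigma G ≠ ⊤) :
    ∃ 𝒮 : Finset (Subgroup G), IsCover 𝒮 ∧ (𝒮.card : ℕ∞) = groupSigma G := by
  have hne :
      {n : ℕ∞ | ∃ 𝒮 : Finset (Subgroup G), IsCover 𝒮 ∧ (𝒮.card : ℕ∞) = n}.Nonempty := by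
    contrapose! h
    rw [groupSigma, h, sInf_empty]
  exact csInf_mem hne

lemma IsCover.comap {M : Type*} [Group M] [DecidableEq (Subgroup M)]
    {𝒮 : Finset (Subgroup G)} (h𝒮 : IsCover 𝒮) (φ : M →* G)
    (hφ : ∀ K ∈ 𝒮, ¬ φ.range ≤ K) : IsCover (𝒮.image (Subgroup.comap φ)) := by
  refine ⟨?_, fun x => ?_⟩
  · simp only [Finset.mem_image, forall_exists_index, and_imp, forall_apply_eq_imp_iff₂]
    intro K hK htop
    exact hφ K hK (by rw [φ.range_eq_map, Subgroup.map_le_iff_le_comap, htop])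
  · obtain ⟨K, hK, hxK⟩ := h𝒮.2 (φ x)
    exact ⟨K.comap φ, Finset.mem_image_of_mem _ hK, hxK⟩

lemma groupSigma_le_card_of_range_notMem {M : Type*} [Group M] {𝒮 : Finset (Subgroup G)}
    (h𝒮 : IsCover 𝒮) (φ : M →* G) (hφ : IsCoatom φ.range) (hnot : φ.range ∉ 𝒮) :
    groupSigma M ≤ 𝒮.card := by
  classical
  have hcov : IsCover (𝒮.image (Subgroup.comap φ)) := by
    refine h𝒮.comap φ fun K hK hle => ?_
    rcases hφ.le_iff.mp hle with rfl | rfl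
    exacts [h𝒮.1 _ hK rfl, hnot hK]
  calc groupSigma M ≤ (𝒮.image (Subgroup.comap φ)).card := groupSigma_le_card hcov
    _ ≤ 𝒮.card := by exact_mod_cast Finset.card_image_le

lemma IsCoatom.normalizer_eq_self {H : Subgroup G} (hmax : IsCoatom H) (hnn : ¬ H.Normal) :
    Subgroup.normalizer (H : Set G) = H := by
  refine (hmax.le_iff.mp H.le_normalizer).resolve_left fun h => hnn ?_
  exact Subgroup.normalizer_eq_top_iff.mp h

lemma ncard_orbit_conjAct (H : Subgroup G) :
    (orbit (ConjAct G) H).ncard = (Subgroup.normalizer (H : Set G)).index := by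
  have hstab : (stabilizer (ConjAct G) H).comap (ConjAct.toConjAct : G ≃* ConjAct G).toMonoidHom
      = Subgroup.normalizer (H : Set G) := by
    ext g
    exact Subgroup.conjAct_pointwise_smul_iff
  rw [← index_stabilizer, ← hstab,
    Subgroup.index_comap_of_surjective _ ConjAct.toConjAct.surjective]

lemma IsCoatom.conjAct_smul {H : Subgroup G} (hH : IsCoatom H) (c : ConjAct G) :
    IsCoatom (c • H) :=
  (OrderIso.isCoatom_iff (MulDistribMulAction.toMulAut (ConjAct G) G c).mapSubgroup H).mpr hH

lemma conjAct_smul_mem_of_card_lt_groupSigma {H : Subgroup G} (hH : IsCoatom H)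
    {𝒮 : Finset (Subgroup G)} (h𝒮 : IsCover 𝒮) (hlt : (𝒮.card : ℕ∞) < groupSigma H)
    (c : ConjAct G) : c • H ∈ 𝒮 := by
  by_contra hnot
  have hrange : ((MulDistribMulAction.toMulAut (ConjAct G) G c : G →* G).comp H.subtype).range
      = c • H := by
    rw [MonoidHom.range_comp, Subgroup.range_subtype]
    rfl
  exact (groupSigma_le_card_of_range_notMem h𝒮 _ (hrange ▸ hH.conjAct_smul c)
    (hrange ▸ hnot)).not_gt hlt
end

theorem sigma_ge_of_maximal_not_normal_general
    {G : Type*} [Group G]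
    (H : Subgroup G) (hmax : IsCoatom H) (hnn : ¬ H.Normal)
    (hlt : groupSigma ↥H < (H.index : ℕ∞)) :
    groupSigma ↥H ≤ groupSigma G := by
  by_contra! hsigma
  obtain ⟨𝒮, h𝒮, hcard⟩ := exists_isCover_card_eq_groupSigma hsigma.ne_top
  have hconj : orbit (ConjAct G) H ⊆ 𝒮 := by
    rintro _ ⟨c, rfl⟩
    exact conjAct_smul_mem_of_card_lt_groupSigma hmax h𝒮 (hcard ▸ hsigma) c
  have hindex : H.index ≤ 𝒮.card := by
    rw [← hmax.normalizer_eq_self hnn, ← ncard_orbit_conjAct, ← Set.ncard_coe_finset]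
    exact Set.ncard_le_ncard hconj
  have := calc (H.index : ℕ∞) ≤ 𝒮.card := by exact_mod_cast hindex
    _ = groupSigma G := hcard
    _ < groupSigma H := hsigma
    _ < H.index := hlt
  exact this.false

/-- If `H` is a maximal non-normal subgroup of a finite non-cyclic group `G` with
`σ(H) < [G : H]`, then `σ(G) ≥ σ(H)`. -/
theorem sigma_ge_of_maximal_not_normal
    {G : Type*} [Group G] [Finite G] (hG : ¬ IsCyclic G)
    (H : Subgroup G) (hmax : IsCoatom H) (hnn : ¬ H.Normal)
    (hlt : groupSigma ↥H < (H.index : ℕ∞)) :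
    groupSigma ↥H ≤ groupSigma G :=
  sigma_ge_of_maximal_not_normal_general H hmax hnn hlt
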